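/- arXiv:2306.04999 — 4 statements merged into one kernel-verified Lean document; each statement's English description precedes it below -/
import Mathlib

section
/- Let M ∈ ℝ^{n×n}, q ∈ ℝⁿ, m : ℝⁿ → ℝⁿ, and α, β > 0. If x ∈ ℝⁿ and z ∈ ℝⁿ satisfy z − m(z) = β(|x| + x) and (αI + βM)x = (αI − βM)|x| − M·m(z) − q, then setting w = α(|x| − x) one has z − m(z) ≥ 0, w = Mz + q ≥ 0, and (z − m(z))ᵀ(Mz + q) = 0; i.e., (z, w) solves the implicit complementarity problem. -/
theorem fixedpoint_to_icp (n : ℕ) (M : Matrix (Fin n) (Fin n) ℝ) (q : Fin n → ℝ)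
    (m : (Fin n → ℝ) → (Fin n → ℝ)) (α β : ℝ) (hα : 0 < α) (hβ : 0 < β)
    (x z : Fin n → ℝ)
    (hz : ∀ i, z i - m z i = β * (|x i| + x i))
    (hx : (α • (1 : Matrix (Fin n) (Fin n) ℝ) + β • M).mulVec x =
      (α • (1 : Matrix (Fin n) (Fin n) ℝ) - β • M).mulVec (fun i => |x i|)
        - M.mulVec (m z) - q) :
    (∀ i, 0 ≤ z i - m z i) ∧
      (fun i => α * (|x i| - x i)) = M.mulVec z + q ∧
      (∀ i, 0 ≤ α * (|x i| - x i)) ∧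
      (∑ i, (z i - m z i) * (M.mulVec z i + q i)) = 0 := by
  have hzdecomp : z = β • ((fun j => |x j|) + x) + m z := by
    funext j
    have := hz j
    simp only [Pi.add_apply, Pi.smul_apply, smul_eq_mul]
    linarith
  have key : ∀ i, M.mulVec z i + q i = α * (|x i| - x i) := by
    intro i
    have hxi := congrFun hx i
    simp only [Matrix.add_mulVec, Matrix.sub_mulVec, Matrix.smul_mulVec,
      Matrix.one_mulVec, Pi.add_apply, Pi.sub_apply, Pi.smul_apply, smul_eq_mul] at hxi
    have hMz : M.mulVec z i =
        β * M.mulVec (fun j => |x j|) i + β * M.mulVec x i + M.mulVec (m z) i := by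
      conv_lhs => rw [hzdecomp]
      simp only [Matrix.mulVec_add, Matrix.mulVec_smul, Pi.add_apply, Pi.smul_apply,
        smul_eq_mul]
      ring
    rw [hMz]; linarith
  have habs : ∀ i, 0 ≤ |x i| + x i := fun i => by
    have := neg_abs_le (x i); linarith
  have habs' : ∀ i, 0 ≤ |x i| - x i := fun i => by
    have := le_abs_self (x i); linarith
  refine ⟨fun i => by rw [hz i]; exact mul_nonneg hβ.le (habs i), ?_, fun i => mul_nonneg hα.le (habs' i), ?_⟩
  · funext i
    simp only [Pi.add_apply]
    exact (key i).symm
  · refine Finset.sum_eq_zero fun i _ => ?_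
    rw [hz i, key i]
    rcases abs_cases (x i) with ⟨h, _⟩ | ⟨h, _⟩ <;> rw [h] <;> ring
end

section
/- Let M ∈ ℝ^{n×n}, q ∈ ℝⁿ, m : ℝⁿ → ℝⁿ, and α, β > 0. If (z, w) solves the implicit complementarity problem (z − m(z) ≥ 0, w = Mz + q ≥ 0, (z − m(z))ᵀw = 0), then the vector x = (1/2)((z − m(z))/β − w/α) satisfies z − m(z) = β(|x| + x), w = α(|x| − x), and hence (αI + βM)x = (αI − βM)|x| − M·m(z) − q. -/
theorem icp_to_fixedpoint (n : ℕ) (M : Matrix (Fin n) (Fin n) ℝ) (q : Fin n → ℝ)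
    (m : (Fin n → ℝ) → (Fin n → ℝ)) (α β : ℝ) (hα : 0 < α) (hβ : 0 < β)
    (z w : Fin n → ℝ)
    (h1 : ∀ i, 0 ≤ z i - m z i)
    (h2 : w = M.mulVec z + q)
    (h3 : ∀ i, 0 ≤ w i)
    (h4 : (∑ i, (z i - m z i) * w i) = 0) :
    let x : Fin n → ℝ := fun i => (1 / 2) * ((z i - m z i) / β - w i / α)
    (∀ i, z i - m z i = β * (|x i| + x i)) ∧
      (∀ i, w i = α * (|x i| - x i)) ∧
      (α • (1 : Matrix (Fin n) (Fin n) ℝ) + β • M).mulVec x =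
        (α • (1 : Matrix (Fin n) (Fin n) ℝ) - β • M).mulVec (fun i => |x i|)
          - M.mulVec (m z) - q := by
  intro x
  -- pointwise complementarity
  have hcomp : ∀ i, (z i - m z i) * w i = 0 := by
    have hnn : ∀ i ∈ Finset.univ, 0 ≤ (z i - m z i) * w i := fun i _ =>
      mul_nonneg (h1 i) (h3 i)
    intro i
    exact (Finset.sum_eq_zero_iff_of_nonneg hnn).mp h4 i (Finset.mem_univ i)
  have habs : ∀ i, |x i| = (1 / 2) * ((z i - m z i) / β + w i / α) := by
    intro i
    rcases mul_eq_zero.mp (hcomp i) with h | h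
    · have hx : x i = -((1/2) * (w i / α)) := by simp [x, h]
      have : |x i| = (1/2) * (w i / α) := by
        rw [hx, abs_neg, abs_of_nonneg]
        have := div_nonneg (h3 i) hα.le; positivity
      rw [this, h]; ring
    · have hx : x i = (1/2) * ((z i - m z i) / β) := by simp [x, h]
      have : |x i| = (1/2) * ((z i - m z i) / β) := by
        rw [hx, abs_of_nonneg]
        have := div_nonneg (h1 i) hβ.le; positivity
      rw [this, h]; ring
  have hz : ∀ i, z i - m z i = β * (|x i| + x i) := by
    intro i
    rw [habs i]
    simp only [x]
    field_simp
    ring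
  have hw : ∀ i, w i = α * (|x i| - x i) := by
    intro i
    rw [habs i]
    simp only [x]
    field_simp
    ring
  refine ⟨hz, hw, ?_⟩
  funext i
  obtain ⟨c, hc⟩ : ∃ c, m z = c := ⟨_, rfl⟩
  have hMz : M.mulVec z = M.mulVec c + β • M.mulVec (fun j => |x j|)
      + β • M.mulVec x := by
    have hzv : z = c + β • (fun j => |x j|) + β • x := by
      funext j
      have := hz j
      rw [hc] at this
      simp only [Pi.add_apply, Pi.smul_apply, smul_eq_mul]
      linarith
    rw [hzv]
    simp [Matrix.mulVec_add, Matrix.mulVec_smul]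
  rw [hc]
  have hwi := congrFun h2 i
  have hMzi := congrFun hMz i
  simp only [Pi.add_apply, Pi.smul_apply, smul_eq_mul] at hwi hMzi
  simp only [Matrix.add_mulVec, Matrix.sub_mulVec, Matrix.smul_mulVec,
    Matrix.one_mulVec, Pi.add_apply, Pi.sub_apply, Pi.smul_apply, smul_eq_mul]
  have := hw i
  rw [hwi, hMzi] at this
  linarith
end

section
/- Let Ω, A ∈ ℝ^{n×n}, M ∈ ℝ^{n×n}, q ∈ ℝⁿ, and let m : ℝⁿ → ℝⁿ be continuous and z : ℝⁿ → ℝⁿ continuous. Define F(x) = (Ω + A)x − (Ω − A)|x| + M·m(z(x)) + q and F_c(x) = (Ω + A)x − (Ω − A)Φ_c(x) + M·m(z(x)) + q, where Φ_c(x)_i = √(x_i² + e^{−c}). Then F_c converges uniformly on ℝⁿ to F as c → ∞, with ‖F_c(x) − F(x)‖_∞ ≤ ‖Ω − A‖_∞ · e^{−c/2} for all x. -/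
noncomputable def rowSumNorm {n : ℕ} (A : Matrix (Fin n) (Fin n) ℝ) : ℝ :=
  ⨆ i, ∑ j, |A i j|

lemma sqrt_abs_key (t ε : ℝ) (hε : 0 ≤ ε) :
    abs (Real.sqrt (t ^ 2 + ε) - |t|) ≤ Real.sqrt ε := by
  have h1 : |t| ≤ Real.sqrt (t ^ 2 + ε) := by
    rw [← Real.sqrt_sq_eq_abs]
    exact Real.sqrt_le_sqrt (by linarith)
  have h2 : Real.sqrt (t ^ 2 + ε) ≤ |t| + Real.sqrt ε := by
    have hle : t ^ 2 + ε ≤ (|t| + Real.sqrt ε) ^ 2 := by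
      have h1 : Real.sqrt ε ^ 2 = ε := Real.sq_sqrt hε
      have h2 : |t| ^ 2 = t ^ 2 := sq_abs t
      have h3 : 0 ≤ |t| * Real.sqrt ε := mul_nonneg (abs_nonneg _) (Real.sqrt_nonneg _)
      nlinarith
    calc Real.sqrt (t ^ 2 + ε) ≤ Real.sqrt ((|t| + Real.sqrt ε) ^ 2) := Real.sqrt_le_sqrt hle
      _ = |t| + Real.sqrt ε := Real.sqrt_sq (by positivity)
  rw [abs_sub_le_iff]
  constructor <;> linarith

lemma rowSumNorm_nonneg {n : ℕ} (A : Matrix (Fin n) (Fin n) ℝ) : 0 ≤ rowSumNorm A :=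
  Real.iSup_nonneg fun i => Finset.sum_nonneg fun j _ => abs_nonneg _

lemma row_le_rowSumNorm {n : ℕ} (A : Matrix (Fin n) (Fin n) ℝ) (i : Fin n) :
    ∑ j, |A i j| ≤ rowSumNorm A := by
  rw [rowSumNorm]
  exact le_ciSup (f := fun i => ∑ j, |A i j|) (Set.Finite.bddAbove (Set.finite_range _)) i

theorem smoothed_residual_uniform_convergence (n : ℕ)
    (Ω A M : Matrix (Fin n) (Fin n) ℝ) (q : Fin n → ℝ)
    (m z : (Fin n → ℝ) → (Fin n → ℝ)) (hm : Continuous m) (hz : Continuous z)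
    (F : (Fin n → ℝ) → (Fin n → ℝ))
    (hF : F = fun x => (Ω + A).mulVec x - (Ω - A).mulVec (fun i => |x i|)
      + M.mulVec (m (z x)) + q)
    (Fc : ℝ → (Fin n → ℝ) → (Fin n → ℝ))
    (hFc : Fc = fun c x => (Ω + A).mulVec x
      - (Ω - A).mulVec (fun i => Real.sqrt ((x i) ^ 2 + Real.exp (-c)))
      + M.mulVec (m (z x)) + q) :
    TendstoUniformly Fc F Filter.atTop ∧
      ∀ c : ℝ, ∀ x : Fin n → ℝ,
        ‖Fc c x - F x‖ ≤ rowSumNorm (Ω - A) * Real.exp (-c / 2) := by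
  have key : ∀ c : ℝ, ∀ x : Fin n → ℝ,
      ‖Fc c x - F x‖ ≤ rowSumNorm (Ω - A) * Real.exp (-c / 2) := by
    intro c x
    subst hF hFc
    simp only
    have hdiff : ((fun x => (Ω + A).mulVec x
        - (Ω - A).mulVec (fun i => Real.sqrt ((x i) ^ 2 + Real.exp (-c)))
        + M.mulVec (m (z x)) + q) x)
        - ((fun x => (Ω + A).mulVec x - (Ω - A).mulVec (fun i => |x i|)
        + M.mulVec (m (z x)) + q) x)
        = (Ω - A).mulVec (fun i => |x i| - Real.sqrt ((x i) ^ 2 + Real.exp (-c))) := by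
      simp only
      rw [show (fun i => |x i| - Real.sqrt ((x i) ^ 2 + Real.exp (-c)))
          = (fun i => |x i|) - (fun i => Real.sqrt ((x i) ^ 2 + Real.exp (-c))) from rfl,
        Matrix.mulVec_sub]
      abel
    rw [hdiff]
    rw [pi_norm_le_iff_of_nonneg (mul_nonneg (rowSumNorm_nonneg _) (Real.exp_nonneg _))]
    intro i
    have hbound : ∀ j, |(fun i => |x i| - Real.sqrt ((x i) ^ 2 + Real.exp (-c))) j|
        ≤ Real.exp (-c / 2) := by
      intro j
      have := sqrt_abs_key (x j) (Real.exp (-c)) (Real.exp_nonneg _)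
      rw [abs_sub_comm] at this
      calc |(|x j| - Real.sqrt ((x j) ^ 2 + Real.exp (-c)))| ≤ Real.sqrt (Real.exp (-c)) := this
        _ = Real.exp (-c / 2) := by
            rw [← Real.exp_half]
    calc ‖(Ω - A).mulVec (fun i => |x i| - Real.sqrt ((x i) ^ 2 + Real.exp (-c))) i‖
        = |∑ j, (Ω - A) i j * (|x j| - Real.sqrt ((x j) ^ 2 + Real.exp (-c)))| := by
          simp [Matrix.mulVec, dotProduct, Matrix.sub_apply]
      _ ≤ ∑ j, |(Ω - A) i j * (|x j| - Real.sqrt ((x j) ^ 2 + Real.exp (-c)))| :=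
          Finset.abs_sum_le_sum_abs _ _
      _ ≤ ∑ j, |(Ω - A) i j| * Real.exp (-c / 2) := by
          apply Finset.sum_le_sum
          intro j _
          rw [abs_mul]
          exact mul_le_mul_of_nonneg_left (hbound j) (abs_nonneg _)
      _ = (∑ j, |(Ω - A) i j|) * Real.exp (-c / 2) := by rw [← Finset.sum_mul]
      _ ≤ rowSumNorm (Ω - A) * Real.exp (-c / 2) :=
          mul_le_mul_of_nonneg_right (row_le_rowSumNorm _ i) (Real.exp_nonneg _)
  refine ⟨?_, key⟩
  rw [Metric.tendstoUniformly_iff]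
  intro ε hε
  have htend : Filter.Tendsto (fun c : ℝ => rowSumNorm (Ω - A) * Real.exp (-c / 2))
      Filter.atTop (nhds 0) := by
    have : Filter.Tendsto (fun c : ℝ => Real.exp (-c / 2)) Filter.atTop (nhds 0) := by
      apply Real.tendsto_exp_atBot.comp
      apply Filter.Tendsto.atBot_div_const (by norm_num)
      exact Filter.tendsto_neg_atBot_iff.mpr Filter.tendsto_id
    simpa using this.const_mul (rowSumNorm (Ω - A))
  filter_upwards [htend.eventually (gt_mem_nhds hε)] with c hc x
  calc dist (F x) (Fc c x) = ‖Fc c x - F x‖ := by rw [dist_eq_norm, norm_sub_rev]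
    _ ≤ rowSumNorm (Ω - A) * Real.exp (-c / 2) := key c x
    _ < ε := hc
end

section
/- Let F : ℝ → ℝ be three times continuously differentiable with F(x*) = 0 and F′(x*) ≠ 0. Define the iteration y_k = x_k − F′(x_k)^{−1} F(x_k), x_{k+1} = y_k − F′(x_k)^{−1} F(y_k). Then there exist a neighborhood U of x* and a constant C > 0 such that for x_k ∈ U, |x_{k+1} − x*| ≤ C |x_k − x*|³. -/
/-!
Both substeps are chord steps with the frozen slope `F'(x)`: for `z` near the root,
`z - F'(x)⁻¹ F(z) - x* = F'(x)⁻¹ (F'(x) (z - x*) - (F z - F x*))`, and since `F'` is Lipschitz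
near `x*` the bracket is `O((|x - x*| + |z - x*|) |z - x*|)`. Taking `z = x` gives
`|y - x*| = O(|x - x*|²)`, and then `z = y` gives `|x' - x*| = O(|x - x*| · |x - x*|²)`.
-/

open Set Metric Filter Topology NNReal

theorem abs_sub_sub_deriv_mul_le_of_lipschitzOnWith {F : ℝ → ℝ} {s : Set ℝ} {L : ℝ≥0}
    {a b c R : ℝ} (hF : Differentiable ℝ F) (hs : Convex ℝ s)
    (hLip : LipschitzOnWith L (deriv F) s) (ha : a ∈ s) (hb : b ∈ s) (hc : c ∈ s)
    (hac : |a - c| ≤ R) (hbc : |b - c| ≤ R) :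
    |F b - F a - deriv F c * (b - a)| ≤ L * R * |b - a| := by
  have hs' : Convex ℝ (s ∩ closedBall c R) := hs.inter (convex_closedBall c R)
  have hderiv : ∀ t ∈ s ∩ closedBall c R,
      HasDerivWithinAt (fun t => F t - deriv F c * t) (deriv F t - deriv F c)
        (s ∩ closedBall c R) t := fun t _ => by
    have h := (hF t).hasDerivAt.sub ((hasDerivAt_id' t).const_mul (deriv F c))
    rw [mul_one] at h
    exact h.hasDerivWithinAt
  have hbound : ∀ t ∈ s ∩ closedBall c R, ‖deriv F t - deriv F c‖ ≤ L * R := fun t ht => by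
    calc ‖deriv F t - deriv F c‖ ≤ L * ‖t - c‖ := hLip.norm_sub_le ht.1 hc
      _ ≤ L * R := by gcongr; exact mem_closedBall.mp ht.2
  have key := hs'.norm_image_sub_le_of_norm_hasDerivWithin_le hderiv hbound
    ⟨ha, mem_closedBall.mpr hac⟩ ⟨hb, mem_closedBall.mpr hbc⟩
  simp only [Real.norm_eq_abs] at key
  calc |F b - F a - deriv F c * (b - a)|
      = |F b - deriv F c * b - (F a - deriv F c * a)| := by ring_nf
    _ ≤ L * R * |b - a| := key

theorem abs_sub_inv_mul_sub_le {d v z xs m K : ℝ} (hm : 0 < m) (hd : m ≤ |d|)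
    (h : |v - d * (z - xs)| ≤ K) : |z - d⁻¹ * v - xs| ≤ K / m := by
  have hd0 : d ≠ 0 := abs_pos.mp (hm.trans_le hd)
  have hK : 0 ≤ K := (abs_nonneg _).trans h
  calc |z - d⁻¹ * v - xs| = |v - d * (z - xs)| / |d| := by
        rw [abs_sub_comm v, ← abs_div]; congr 1; field_simp; ring
    _ ≤ K / m := div_le_div₀ hK h hm hd

theorem abs_sub_inv_deriv_mul_sub_le {F : ℝ → ℝ} {xs r m x y : ℝ} {L : ℝ≥0}
    (hF : Differentiable ℝ F) (hroot : F xs = 0) (hLip : LipschitzOnWith L (deriv F) (ball xs r))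
    (hm : 0 < m) (hlow : m ≤ |deriv F x|) (hx : x ∈ ball xs r) (hy : y ∈ ball xs r) :
    |y - (deriv F x)⁻¹ * F y - xs| ≤ L / m * (|x - xs| + |y - xs|) * |y - xs| := by
  have hxs : xs ∈ ball xs r := mem_ball_self (pos_of_mem_ball hx)
  have hxs_x : |xs - x| ≤ |x - xs| + |y - xs| := by
    rw [abs_sub_comm]; linarith [abs_nonneg (y - xs)]
  have hy_x : |y - x| ≤ |x - xs| + |y - xs| :=
    (abs_sub_le y xs x).trans_eq (by rw [abs_sub_comm xs x, add_comm])
  have hlin := abs_sub_sub_deriv_mul_le_of_lipschitzOnWith hF (convex_ball xs r) hLip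
    hxs hy hx hxs_x hy_x
  rw [hroot, sub_zero] at hlin
  calc |y - (deriv F x)⁻¹ * F y - xs|
      ≤ L * (|x - xs| + |y - xs|) * |y - xs| / m := abs_sub_inv_mul_sub_le hm hlow hlin
    _ = L / m * (|x - xs| + |y - xs|) * |y - xs| := by ring

theorem abs_two_step_newton_sub_le {F : ℝ → ℝ} {xs r m x : ℝ} {L : ℝ≥0}
    (hF : Differentiable ℝ F) (hroot : F xs = 0) (hLip : LipschitzOnWith L (deriv F) (ball xs r))
    (hm : 0 < m) (hLr : 2 * L * r ≤ m) (hlow : m ≤ |deriv F x|) (hx : x ∈ ball xs r) :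
    let y := x - (deriv F x)⁻¹ * F x
    |y - (deriv F x)⁻¹ * F y - xs| ≤ 4 * L ^ 2 / m ^ 2 * |x - xs| ^ 3 := by
  intro y
  have hxr : |x - xs| < r := by rw [← Real.dist_eq]; exact hx
  have hy : |y - xs| ≤ L / m * (2 * |x - xs|) * |x - xs| := by
    simpa [two_mul] using abs_sub_inv_deriv_mul_sub_le hF hroot hLip hm hlow hx hx
  have hye : |y - xs| ≤ |x - xs| := by
    have hsmall : 2 * L * |x - xs| / m ≤ 1 :=
      (div_le_one hm).mpr ((by gcongr : 2 * L * |x - xs| ≤ 2 * L * r).trans hLr)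
    calc |y - xs| ≤ 2 * L * |x - xs| / m * |x - xs| := hy.trans_eq (by ring)
      _ ≤ |x - xs| := mul_le_of_le_one_left (abs_nonneg _) hsmall
  have hyball : y ∈ ball xs r := by
    rw [mem_ball, Real.dist_eq]; exact hye.trans_lt hxr
  calc |y - (deriv F x)⁻¹ * F y - xs| ≤ L / m * (|x - xs| + |y - xs|) * |y - xs| :=
        abs_sub_inv_deriv_mul_sub_le hF hroot hLip hm hlow hx hyball
    _ ≤ L / m * (2 * |x - xs|) * (L / m * (2 * |x - xs|) * |x - xs|) := by
        gcongr; linarith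
    _ = 4 * L ^ 2 / m ^ 2 * |x - xs| ^ 3 := by ring

theorem two_step_newton_cubic_convergence (F : ℝ → ℝ) (xs : ℝ)
    (hF : ContDiff ℝ 3 F) (hroot : F xs = 0) (hF' : deriv F xs ≠ 0) :
    ∃ U ∈ nhds xs, ∃ C > 0, ∀ x ∈ U,
      let y := x - (deriv F x)⁻¹ * F x
      let x' := y - (deriv F x)⁻¹ * F y
      |x' - xs| ≤ C * |x - xs| ^ 3 := by
  have hF'' : ContDiff ℝ 2 (deriv F) := hF.deriv'
  -- the `+ 1` keeps `L`, and with it the constant `C`, positive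
  set L : ℝ≥0 := ‖fderiv ℝ (deriv F) xs‖₊ + 1
  obtain ⟨t, ht, hLip⟩ := ((hF''.of_le one_le_two).contDiffAt (x := xs)
    ).exists_lipschitzOnWith_of_nnnorm_lt L (lt_add_one _)
  set m := |deriv F xs| / 2
  have hm : 0 < m := by positivity
  have hlow : ∀ᶠ x in 𝓝 xs, m < |deriv F x| := continuousAt_const.eventually_lt
    hF''.continuous.abs.continuousAt (half_lt_self (abs_pos.mpr hF'))
  obtain ⟨ε, hε, hball⟩ := Metric.mem_nhds_iff.mp (inter_mem ht hlow)
  set r := min ε (m / (2 * L))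
  have hr : 0 < r := lt_min hε (by positivity)
  have hLr : 2 * L * r ≤ m := by
    rw [← le_div_iff₀' (by positivity)]; exact min_le_right _ _
  have hsub : ball xs r ⊆ t ∩ {x | m < |deriv F x|} :=
    (ball_subset_ball (min_le_left _ _)).trans hball
  refine ⟨ball xs r, ball_mem_nhds xs hr, 4 * L ^ 2 / m ^ 2, by positivity, fun x hx => ?_⟩
  exact abs_two_step_newton_sub_le (hF.differentiable (by norm_num)) hroot
    (hLip.mono (hsub.trans inter_subset_left)) hm hLr (hsub hx).2.le hx
end
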